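/- Let m be a positive integer, let α₁,...,α_k be positive irrational real numbers and β₁,...,β_k any real numbers, and set θ_i = 1/α_i and γ_i = −β_i/α_i; assume Σ_{i=1}^k θ_i = m. Then the family {S(α₁,β₁),...,S(α_k,β_k)} is an m-EEC if and only if the function ε(N) = Σ_{i=1}^k {Nθ_i + γ_i} is eventually constant, i.e., there exist a real number c and an integer N₀ such that ε(N) = c for all N ≥ N₀. -/

import Mathlib

open scoped BigOperators

/-- The number of positive integers `n` with `⌊n·α + β⌋ = N`, i.e. the multiplicity
of `N` in the Beatty sequence `S(α,β)`. -/
noncomputable def beattyCount (α β : ℝ) (N : ℤ) : ℕ :=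
  Nat.card {n : ℕ // 0 < n ∧ ⌊(n : ℝ) * α + β⌋ = N}

/-- The family `{S(α i, β i)}` is an eventual exact `m`-cover. -/
def IsEEC {k : ℕ} (α β : Fin k → ℝ) (m : ℕ) : Prop :=
  ∃ N₀ : ℤ, ∀ N : ℤ, N ≥ N₀ → (∑ i, beattyCount (α i) (β i) N) = m

/-!
Writing `x_N = Nθ + γ = (N - β)/α`, the multiplicity of `N` in `S(α,β)` is the number of integers
`n ≥ 1` in `[x_N, x_N + θ)`, namely `⌈x_{N+1}⌉ - ⌈x_N⌉` once `x_N > 0`. For irrational `α` at most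
one `x_N` is an integer, so eventually `⌈x_N⌉ = x_N + 1 - {x_N}` and the multiplicity equals
`θ + {x_N} - {x_{N+1}}`. Summing over the family and using `Σ θ_i = m`, the total multiplicity of
`N` is eventually `m + ε(N) - ε(N+1)`; it is eventually `m` iff `ε` is eventually invariant under
`N ↦ N + 1`, i.e. eventually constant.
-/

open Filter

theorem tendsto_add_one_atTop : Tendsto (fun N : ℤ => N + 1) atTop atTop :=
  tendsto_atTop_add_const_right atTop 1 tendsto_id

theorem beattyCount_eq_ceil_sub_ceil {α β : ℝ} (hα : 0 < α) {N : ℤ} (hN : β < N) :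
    (beattyCount α β N : ℤ) = ⌈((N : ℝ) + 1 - β) / α⌉ - ⌈((N : ℝ) - β) / α⌉ := by
  set x := ((N : ℝ) - β) / α
  set y := ((N : ℝ) + 1 - β) / α
  have hx : 0 < ⌈x⌉ := Int.ceil_pos.2 (div_pos (sub_pos.2 hN) hα)
  have hxy : ⌈x⌉ ≤ ⌈y⌉ := Int.ceil_mono (div_le_div_of_nonneg_right (by linarith) hα.le)
  have hmem : ∀ n : ℕ, (0 < n ∧ ⌊(n : ℝ) * α + β⌋ = N) ↔ n ∈ Finset.Ico ⌈x⌉.toNat ⌈y⌉.toNat := by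
    intro n
    have hfloor : ⌊(n : ℝ) * α + β⌋ = N ↔ ⌈x⌉ ≤ n ∧ (n : ℤ) < ⌈y⌉ := by
      rw [Int.floor_eq_iff, Int.ceil_le, Int.lt_ceil, div_le_iff₀ hα, lt_div_iff₀ hα]
      push_cast
      constructor <;> rintro ⟨h₁, h₂⟩ <;> constructor <;> linarith
    rw [hfloor, Finset.mem_Ico]
    omega
  rw [beattyCount, Nat.card_congr (Equiv.subtypeEquivRight hmem), Nat.card_eq_finsetCard,
    Nat.card_Ico]
  omega

theorem Irrational.eventually_fract_sub_div_ne_zero {α : ℝ} (hα : Irrational α) (β : ℝ) :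
    ∀ᶠ N : ℤ in atTop, Int.fract (((N : ℝ) - β) / α) ≠ 0 := by
  have hsub : {N : ℤ | Int.fract (((N : ℝ) - β) / α) = 0}.Subsingleton := by
    intro N hN N' hN'
    obtain ⟨n, hn⟩ := Int.fract_eq_zero_iff.1 hN
    obtain ⟨n', hn'⟩ := Int.fract_eq_zero_iff.1 hN'
    rw [eq_div_iff hα.ne_zero] at hn hn'
    have hdiff : ((n - n' : ℤ) : ℝ) * α = ((N - N' : ℤ) : ℝ) := by push_cast; linarith
    have hn_eq : n = n' := by
      by_contra hne
      exact (hα.intCast_mul (sub_ne_zero.2 hne)).ne_int _ hdiff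
    subst hn_eq
    simpa [sub_eq_zero] using hdiff.symm
  exact hsub.finite.eventually_cofinite_notMem.filter_mono atTop_le_cofinite

theorem beattyCount_eventually_eq {α : ℝ} (hα : 0 < α) (hirr : Irrational α) (β : ℝ) :
    ∀ᶠ N : ℤ in atTop, (beattyCount α β N : ℝ) =
      1 / α + Int.fract ((N : ℝ) * (1 / α) + -β / α)
        - Int.fract (((N + 1 : ℤ) : ℝ) * (1 / α) + -β / α) := by
  have hfract := hirr.eventually_fract_sub_div_ne_zero β
  filter_upwards [tendsto_intCast_atTop_atTop.eventually_gt_atTop β, hfract,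
    tendsto_add_one_atTop.eventually hfract] with N hN h₀ h₁
  have hx : ∀ M : ℤ, (M : ℝ) * (1 / α) + -β / α = ((M : ℝ) - β) / α := fun M => by ring
  rw [hx, hx, ← Int.cast_natCast, beattyCount_eq_ceil_sub_ceil hα hN]
  push_cast at h₁ ⊢
  rw [Int.ceil_eq_add_one_sub_fract h₀, Int.ceil_eq_add_one_sub_fract h₁]
  ring

theorem exists_eventually_eq_iff_eventually_add_one_eq {γ : Type*} {f : ℤ → γ} :
    (∃ c, ∀ᶠ N in atTop, f N = c) ↔ ∀ᶠ N in atTop, f (N + 1) = f N := by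
  constructor
  · rintro ⟨c, hc⟩
    filter_upwards [hc, tendsto_add_one_atTop.eventually hc] with N h₀ h₁
    rw [h₀, h₁]
  · intro h
    obtain ⟨N₀, hN₀⟩ := eventually_atTop.1 h
    refine ⟨f N₀, eventually_atTop.2 ⟨N₀, fun N hN => ?_⟩⟩
    induction N, hN using Int.leInduction with
    | base => rfl
    | succ N hN ih => rw [hN₀ N hN, ih]

theorem mEEC_iff_fract_sum_eventually_constant_general (m k : ℕ)
    (α β : Fin k → ℝ) (hpos : ∀ i, 0 < α i) (hirr : ∀ i, Irrational (α i))
    (hsum : ∑ i, 1 / α i = (m : ℝ)) :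
    IsEEC α β m ↔
      ∃ (c : ℝ) (N₀ : ℤ), ∀ N : ℤ, N ≥ N₀ →
        ∑ i, Int.fract ((N : ℝ) * (1 / α i) + (-(β i) / α i)) = c := by
  set ε : ℤ → ℝ := fun N => ∑ i, Int.fract ((N : ℝ) * (1 / α i) + (-(β i) / α i))
  have key : ∀ᶠ N in atTop,
      ((∑ i, beattyCount (α i) (β i) N : ℕ) : ℝ) = m + ε N - ε (N + 1) := by
    filter_upwards [eventually_all.2 fun i => beattyCount_eventually_eq (hpos i) (hirr i) (β i)]
      with N hN
    rw [Nat.cast_sum, Finset.sum_congr rfl fun i _ => hN i, Finset.sum_sub_distrib,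
      Finset.sum_add_distrib, hsum]
  calc IsEEC α β m
      ↔ ∀ᶠ N in atTop, ∑ i, beattyCount (α i) (β i) N = m := eventually_atTop.symm
    _ ↔ ∀ᶠ N in atTop, ε (N + 1) = ε N := eventually_congr <| key.mono fun N hN => by
        rw [← Nat.cast_inj (R := ℝ), hN]
        constructor <;> intro <;> linarith
    _ ↔ ∃ c, ∀ᶠ N in atTop, ε N = c := exists_eventually_eq_iff_eventually_add_one_eq.symm
    _ ↔ _ := by simp only [eventually_atTop, ε]

theorem mEEC_iff_fract_sum_eventually_constant (m k : ℕ) (hm : 0 < m)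
    (α β : Fin k → ℝ) (hpos : ∀ i, 0 < α i) (hirr : ∀ i, Irrational (α i))
    (hsum : ∑ i, 1 / α i = (m : ℝ)) :
    IsEEC α β m ↔
      ∃ (c : ℝ) (N₀ : ℤ), ∀ N : ℤ, N ≥ N₀ →
        ∑ i, Int.fract ((N : ℝ) * (1 / α i) + (-(β i) / α i)) = c :=
  mEEC_iff_fract_sum_eventually_constant_general m k α β hpos hirr hsum
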